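/- For g ∈ L²([0,1]^n), equality ∫ g² dξ = Σ_i ∫ g_i² dξ_i − (n−1)(∫ g dξ)² holds if and only if g(ξ) = Σ_{i=1}^n g_i(ξ_i) − (n−1)∫ g dξ almost everywhere. -/

import Mathlib

open MeasureTheory

/-- Lebesgue measure restricted to the unit interval. -/
noncomputable def lineMeasure : Measure ℝ := volume.restrict (Set.Icc (0:ℝ) 1)

/-- The (product) Lebesgue measure on the unit hypercube `[0,1]^n`. -/
noncomputable def cubeMeasure (n : ℕ) : Measure (Fin n → ℝ) :=
  Measure.pi fun _ => lineMeasure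

/-- The `i`-th marginal of `g`: the integral of `g` over all coordinates except the `i`-th
(since `cubeMeasure n` is a product of probability measures, integrating the updated function
over the full cube agrees with integrating over `ξ_i^c`). -/
noncomputable def marginal {n : ℕ} (g : (Fin n → ℝ) → ℝ) (i : Fin n) (x : ℝ) : ℝ :=
  ∫ ξ, g (Function.update ξ i x) ∂(cubeMeasure n)

open Function
open scoped ENNReal

instance : IsProbabilityMeasure lineMeasure :=
  ⟨by simp [lineMeasure, Real.volume_Icc]⟩

instance (n : ℕ) : IsProbabilityMeasure (cubeMeasure n) := by
  unfold cubeMeasure; infer_instance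

instance (n : ℕ) : SigmaFinite (cubeMeasure n) := by
  unfold cubeMeasure; infer_instance

lemma measurable_updateT {n : ℕ} (i : Fin n) :
    Measurable (fun p : ℝ × (Fin n → ℝ) => Function.update p.2 i p.1) :=
  measurable_update'.comp (measurable_snd.prodMk measurable_fst)

lemma measurePreserving_updateT (n : ℕ) (i : Fin n) :
    MeasurePreserving (fun p : ℝ × (Fin n → ℝ) => Function.update p.2 i p.1)
      (lineMeasure.prod (cubeMeasure n)) (cubeMeasure n) := by
  refine ⟨measurable_updateT i, ?_⟩
  have : (lineMeasure.prod (cubeMeasure n)).map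
      (fun p : ℝ × (Fin n → ℝ) => Function.update p.2 i p.1)
      = Measure.pi (fun _ : Fin n => lineMeasure) := by
    refine (Measure.pi_eq (μ := fun _ : Fin n => lineMeasure) fun s hs => ?_).symm
    rw [Measure.map_apply (measurable_updateT i) (MeasurableSet.univ_pi hs)]
    have hpre : (fun p : ℝ × (Fin n → ℝ) => Function.update p.2 i p.1) ⁻¹' Set.pi Set.univ s
        = s i ×ˢ Set.pi Set.univ (Function.update s i Set.univ) := by
      ext ⟨x, ξ⟩
      simp only [Set.mem_preimage, Set.mem_pi, Set.mem_univ, forall_true_left, Set.mem_prod]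
      constructor
      · intro hmem
        refine ⟨by simpa using hmem i, fun j => ?_⟩
        rcases eq_or_ne j i with rfl | hj
        · simp
        · simpa [Function.update_of_ne hj] using hmem j
      · rintro ⟨hx, hξ⟩ j
        rcases eq_or_ne j i with rfl | hj
        · simpa using hx
        · have := hξ j
          simpa [Function.update_of_ne hj] using this
    rw [hpre, Measure.prod_prod]
    show lineMeasure (s i) * cubeMeasure n _ = _
    rw [cubeMeasure, Measure.pi_pi]
    have h1 : ∏ j, lineMeasure (Function.update s i Set.univ j)
        = ∏ j ∈ Finset.univ.erase i, lineMeasure (s j) := by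
      rw [← Finset.mul_prod_erase Finset.univ _ (Finset.mem_univ i)]
      have h2 : ∏ j ∈ Finset.univ.erase i, lineMeasure (Function.update s i Set.univ j)
          = ∏ j ∈ Finset.univ.erase i, lineMeasure (s j) :=
        Finset.prod_congr rfl fun j hj => by
          rw [Function.update_of_ne (Finset.ne_of_mem_erase hj)]
      rw [h2]
      simp
    rw [h1]
    exact Finset.mul_prod_erase Finset.univ (fun j => lineMeasure (s j)) (Finset.mem_univ i)
  exact this

lemma measurePreserving_evalC (n : ℕ) (i : Fin n) :
    MeasurePreserving (fun ξ : Fin n → ℝ => ξ i) (cubeMeasure n) lineMeasure := by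
  refine ⟨measurable_pi_apply i, ?_⟩
  rw [← (measurePreserving_updateT n i).map_eq,
    Measure.map_map (measurable_pi_apply i) (measurable_updateT i)]
  have h : ((fun ξ : Fin n → ℝ => ξ i) ∘ fun p : ℝ × (Fin n → ℝ) => Function.update p.2 i p.1)
      = Prod.fst := by
    funext p; simp
  rw [h, Measure.map_fst_prod]
  simp

lemma integral_marg {n : ℕ} (i : Fin n) {F : (Fin n → ℝ) → ℝ}
    (hF : Integrable F (cubeMeasure n)) :
    ∫ ξ, F ξ ∂cubeMeasure n
      = ∫ x, ∫ ξ, F (Function.update ξ i x) ∂cubeMeasure n ∂lineMeasure := by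
  have h1 := measurePreserving_updateT n i
  have hFm : AEStronglyMeasurable F
      ((lineMeasure.prod (cubeMeasure n)).map
        (fun p : ℝ × (Fin n → ℝ) => Function.update p.2 i p.1)) := by
    rw [h1.map_eq]; exact hF.aestronglyMeasurable
  calc ∫ ξ, F ξ ∂cubeMeasure n
      = ∫ p, F (Function.update p.2 i p.1) ∂(lineMeasure.prod (cubeMeasure n)) := by
        have h2 := integral_map (μ := lineMeasure.prod (cubeMeasure n))
          (measurable_updateT i).aemeasurable hFm
        rw [h1.map_eq] at h2
        exact h2
    _ = ∫ x, ∫ ξ, F (Function.update ξ i x) ∂cubeMeasure n ∂lineMeasure := by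
        apply integral_prod
        have h3 : Integrable (F ∘ fun p : ℝ × (Fin n → ℝ) => Function.update p.2 i p.1)
            (lineMeasure.prod (cubeMeasure n)) := by
          rw [← integrable_map_measure hFm (measurable_updateT i).aemeasurable, h1.map_eq]
          exact hF
        exact h3

lemma lintegral_marg {n : ℕ} (i : Fin n) {F : (Fin n → ℝ) → ℝ≥0∞}
    (hF : Measurable F) :
    ∫⁻ ξ, F ξ ∂cubeMeasure n
      = ∫⁻ x, ∫⁻ ξ, F (Function.update ξ i x) ∂cubeMeasure n ∂lineMeasure := by
  have h1 := measurePreserving_updateT n i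
  calc ∫⁻ ξ, F ξ ∂cubeMeasure n
      = ∫⁻ p, F (Function.update p.2 i p.1) ∂(lineMeasure.prod (cubeMeasure n)) :=
        (h1.lintegral_comp hF).symm
    _ = _ := lintegral_prod _ (hF.comp (measurable_updateT i)).aemeasurable

lemma lintegral_sq_le' {α : Type*} [MeasurableSpace α] {μ : Measure α} [IsProbabilityMeasure μ]
    {f : α → ℝ≥0∞} (hf : AEMeasurable f μ) :
    (∫⁻ a, f a ∂μ) ^ 2 ≤ ∫⁻ a, (f a) ^ 2 ∂μ := by
  have hpq : Real.HolderConjugate 2 2 := Real.HolderConjugate.two_two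
  have h := ENNReal.lintegral_mul_le_Lp_mul_Lq μ hpq hf aemeasurable_const (g := fun _ => 1)
  simp only [mul_one, lintegral_const, measure_univ, one_mul, ENNReal.one_rpow] at h
  have h2 : ∫⁻ a, f a ∂μ ≤ (∫⁻ a, f a ^ (2:ℝ) ∂μ) ^ ((1:ℝ)/2) := by simpa using h
  calc (∫⁻ a, f a ∂μ) ^ 2 ≤ ((∫⁻ a, f a ^ (2:ℝ) ∂μ) ^ ((1:ℝ)/2)) ^ 2 := by
        exact pow_le_pow_left' h2 2
    _ = ∫⁻ a, f a ^ (2:ℝ) ∂μ := by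
        rw [← ENNReal.rpow_natCast _ 2, ← ENNReal.rpow_mul]
        norm_num
    _ = ∫⁻ a, f a ^ 2 ∂μ := by
        simp_rw [← ENNReal.rpow_natCast _ 2]; norm_num


lemma stronglyMeasurable_marginal {n : ℕ} {g : (Fin n → ℝ) → ℝ}
    (hg : StronglyMeasurable g) (i : Fin n) : StronglyMeasurable (marginal g i) := by
  have h : StronglyMeasurable (fun p : ℝ × (Fin n → ℝ) => g (Function.update p.2 i p.1)) :=
    hg.comp_measurable (measurable_updateT i)
  exact h.integral_prod_right'

lemma memLp_two_mul_integrable {α : Type*} [MeasurableSpace α] {μ : Measure α} {f g : α → ℝ}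
    (hf : MemLp f 2 μ) (hg : MemLp g 2 μ) : Integrable (fun x => f x * g x) μ := by
  have h : MemLp (f • g) 1 μ := hg.smul hf
  rw [memLp_one_iff_integrable] at h
  simpa [smul_eq_mul, Pi.mul_def] using h

lemma memLp_marginal {n : ℕ} {g : (Fin n → ℝ) → ℝ} (hgm : StronglyMeasurable g)
    (hg : MemLp g 2 (cubeMeasure n)) (i : Fin n) : MemLp (marginal g i) 2 lineMeasure := by
  rw [memLp_two_iff_integrable_sq (stronglyMeasurable_marginal hgm i).aestronglyMeasurable]
  refine ⟨((stronglyMeasurable_marginal hgm i).pow _).aestronglyMeasurable, ?_⟩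
  have hgfin : (∫⁻ ξ, (‖g ξ‖₊ : ℝ≥0∞) ^ 2 ∂cubeMeasure n) < ⊤ := by
    have := hg.integrable_sq.2
    unfold HasFiniteIntegral at this
    have e : ∀ ξ, (‖g ξ‖₊ : ℝ≥0∞) = ‖g ξ‖ₑ := fun _ => rfl
    simp_rw [e]
    simpa [nnnorm_pow, ENNReal.coe_pow] using this
  unfold HasFiniteIntegral
  have hbound : ∀ x : ℝ, (‖(marginal g i x) ^ 2‖₊ : ℝ≥0∞)
      ≤ ∫⁻ ξ, (‖g (Function.update ξ i x)‖₊ : ℝ≥0∞) ^ 2 ∂cubeMeasure n := by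
    intro x
    have h1 : (‖marginal g i x‖₊ : ℝ≥0∞)
        ≤ ∫⁻ ξ, (‖g (Function.update ξ i x)‖₊ : ℝ≥0∞) ∂cubeMeasure n :=
      enorm_integral_le_lintegral_enorm _
    have h2 : (‖marginal g i x‖₊ : ℝ≥0∞) ^ 2
        ≤ (∫⁻ ξ, (‖g (Function.update ξ i x)‖₊ : ℝ≥0∞) ∂cubeMeasure n) ^ 2 :=
      pow_le_pow_left' h1 2
    have h3 := lintegral_sq_le' (μ := cubeMeasure n)
      (f := fun ξ => (‖g (Function.update ξ i x)‖₊ : ℝ≥0∞))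
      ((hgm.measurable.comp measurable_update_left).nnnorm.coe_nnreal_ennreal.aemeasurable)
    calc (‖(marginal g i x) ^ 2‖₊ : ℝ≥0∞) = (‖marginal g i x‖₊ : ℝ≥0∞) ^ 2 := by
          rw [nnnorm_pow]; push_cast; ring
      _ ≤ _ := h2.trans h3
  calc ∫⁻ x, (‖(marginal g i x) ^ 2‖₊ : ℝ≥0∞) ∂lineMeasure
      ≤ ∫⁻ x, ∫⁻ ξ, (‖g (Function.update ξ i x)‖₊ : ℝ≥0∞) ^ 2 ∂cubeMeasure n ∂lineMeasure :=
        lintegral_mono hbound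
    _ = ∫⁻ ξ, (‖g ξ‖₊ : ℝ≥0∞) ^ 2 ∂cubeMeasure n :=
        (lintegral_marg i ((hgm.measurable.nnnorm.coe_nnreal_ennreal).pow_const 2)).symm
    _ < ⊤ := hgfin

theorem key (n : ℕ) (hn : 2 ≤ n) (g : (Fin n → ℝ) → ℝ) (hgm : StronglyMeasurable g)
    (hg : MemLp g 2 (cubeMeasure n)) :
    (∫ ξ, (g ξ)^2 ∂(cubeMeasure n) =
      (∑ i : Fin n, ∫ x, (marginal g i x)^2 ∂lineMeasure)
        - ((n : ℝ) - 1) * (∫ ξ, g ξ ∂(cubeMeasure n))^2)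
    ↔ g =ᵐ[cubeMeasure n]
        (fun ξ => (∑ i : Fin n, marginal g i (ξ i))
          - ((n : ℝ) - 1) * ∫ η, g η ∂(cubeMeasure n)) := by
  set μ := cubeMeasure n with hμ
  set M := marginal g with hM
  set m := ∫ ξ, g ξ ∂μ with hm
  set S := ∑ i : Fin n, ∫ x, (M i x)^2 ∂lineMeasure with hS
  set h : (Fin n → ℝ) → ℝ := fun ξ => (∑ i : Fin n, M i (ξ i)) - ((n:ℝ) - 1) * m with hh_def
  set c : ℝ := ((n:ℝ) - 1) * m with hc
  have hgInt : Integrable g μ := hg.integrable (by norm_num)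
  have hMm : ∀ i, StronglyMeasurable (M i) := fun i => stronglyMeasurable_marginal hgm i
  have hM2 : ∀ i, MemLp (M i) 2 lineMeasure := fun i => memLp_marginal hgm hg i
  have ha2 : ∀ i : Fin n, MemLp (fun ξ : Fin n → ℝ => M i (ξ i)) 2 μ := fun i =>
    (hM2 i).comp_measurePreserving (measurePreserving_evalC n i)
  have haInt : ∀ i : Fin n, Integrable (fun ξ : Fin n → ℝ => M i (ξ i)) μ := fun i =>
    (ha2 i).integrable (by norm_num)
  have hh2 : MemLp h 2 μ := by
    have hsum : MemLp (fun ξ : Fin n → ℝ => ∑ i : Fin n, M i (ξ i)) 2 μ :=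
      memLp_finset_sum _ (fun i _ => ha2 i)
    exact hsum.sub (memLp_const _)
  -- basic facts
  have fact1 : ∀ i : Fin n, ∫ x, M i x ∂lineMeasure = m := fun i =>
    (integral_marg i hgInt).symm
  have evalInt : ∀ (i : Fin n) (f : ℝ → ℝ), AEStronglyMeasurable f lineMeasure →
      ∫ ξ, f (ξ i) ∂μ = ∫ x, f x ∂lineMeasure := by
    intro i f hf
    rw [← (measurePreserving_evalC n i).map_eq,
      integral_map (measurable_pi_apply i).aemeasurable
        (by rwa [(measurePreserving_evalC n i).map_eq])]
  have facta : ∀ i : Fin n, ∫ ξ, M i (ξ i) ∂μ = m := fun i => by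
    rw [evalInt i (M i) (hMm i).aestronglyMeasurable, fact1 i]
  have fact_sq : ∀ i : Fin n, ∫ ξ, (M i (ξ i))^2 ∂μ = ∫ x, (M i x)^2 ∂lineMeasure := fun i =>
    evalInt i (fun x => (M i x)^2) ((hMm i).pow _).aestronglyMeasurable
  have Iaa : ∀ i j : Fin n, Integrable (fun ξ => M i (ξ i) * M j (ξ j)) μ := fun i j =>
    memLp_two_mul_integrable (ha2 i) (ha2 j)
  have Igai : ∀ i : Fin n, Integrable (fun ξ => g ξ * M i (ξ i)) μ := fun i =>
    memLp_two_mul_integrable hg (ha2 i)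
  have fact_cross : ∀ i j : Fin n, i ≠ j → ∫ ξ, M i (ξ i) * M j (ξ j) ∂μ = m * m := by
    intro i j hij
    rw [integral_marg i (Iaa i j)]
    have hx : ∀ x : ℝ, ∫ ξ, M i (Function.update ξ i x i) * M j (Function.update ξ i x j) ∂μ
        = M i x * m := by
      intro x
      have h1 : ∀ ξ : Fin n → ℝ,
          M i (Function.update ξ i x i) * M j (Function.update ξ i x j)
            = M i x * M j (ξ j) := by
        intro ξ
        rw [Function.update_self, Function.update_of_ne (Ne.symm hij)]
      simp_rw [h1]
      rw [integral_const_mul, facta j]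
    rw [integral_congr_ae (Filter.Eventually.of_forall hx)]
    rw [integral_mul_const, fact1 i]
  have fact_gai : ∀ i : Fin n, ∫ ξ, g ξ * M i (ξ i) ∂μ = ∫ x, (M i x)^2 ∂lineMeasure := by
    intro i
    rw [integral_marg i (Igai i)]
    have hx : ∀ x : ℝ, ∫ ξ, g (Function.update ξ i x) * M i (Function.update ξ i x i) ∂μ
        = (M i x)^2 := by
      intro x
      have h1 : ∀ ξ : Fin n → ℝ,
          g (Function.update ξ i x) * M i (Function.update ξ i x i)
            = g (Function.update ξ i x) * M i x := by
        intro ξ; rw [Function.update_self]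
      simp_rw [h1]
      rw [integral_mul_const]
      have : (∫ ξ, g (Function.update ξ i x) ∂μ) = M i x := rfl
      rw [this, sq]
    rw [integral_congr_ae (Filter.Eventually.of_forall hx)]
  -- ∫ g h
  have Igh : ∫ ξ, g ξ * h ξ ∂μ = S - c * m := by
    have hpt : (fun ξ => g ξ * h ξ)
        = fun ξ => (∑ i : Fin n, g ξ * M i (ξ i)) - c * g ξ := by
      funext ξ
      rw [hh_def]
      simp only
      rw [mul_sub, Finset.mul_sum]
      ring
    rw [hpt, integral_sub (integrable_finset_sum _ fun i _ => Igai i) (hgInt.const_mul c),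
      integral_finset_sum _ (fun i _ => Igai i), integral_const_mul]
    rw [Finset.sum_congr rfl fun i _ => fact_gai i]
  -- ∫ h²
  have Ihh : ∫ ξ, (h ξ)^2 ∂μ
      = S + ((n:ℝ)*((n:ℝ)-1))*m^2 - 2*c*((n:ℝ)*m) + c^2 := by
    have hpt : (fun ξ => (h ξ)^2)
        = fun ξ => ((∑ i : Fin n, ∑ j : Fin n, M i (ξ i) * M j (ξ j))
            - 2*c*(∑ i : Fin n, M i (ξ i))) + c^2 := by
      funext ξ
      have e := Finset.sum_mul_sum (Finset.univ : Finset (Fin n)) (Finset.univ : Finset (Fin n))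
        (fun i => M i (ξ i)) (fun j => M j (ξ j))
      rw [hh_def]
      simp only
      rw [← e]
      ring
    have I1 : Integrable (fun ξ => ∑ i : Fin n, ∑ j : Fin n, M i (ξ i) * M j (ξ j)) μ :=
      integrable_finset_sum _ fun i _ => integrable_finset_sum _ fun j _ => Iaa i j
    have I2 : Integrable (fun ξ => 2*c*(∑ i : Fin n, M i (ξ i))) μ :=
      (integrable_finset_sum _ fun i _ => haInt i).const_mul _
    have I12 : Integrable (fun ξ => (∑ i : Fin n, ∑ j : Fin n, M i (ξ i) * M j (ξ j))
        - 2*c*(∑ i : Fin n, M i (ξ i))) μ := I1.sub I2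
    rw [hpt, integral_add I12 (integrable_const _), integral_sub I1 I2,
      integral_finset_sum _ (fun i _ => integrable_finset_sum _ fun j _ => Iaa i j),
      integral_const_mul, integral_finset_sum _ (fun i _ => haInt i), integral_const]
    have hdiag : ∀ i : Fin n, ∑ j : Fin n, ∫ ξ, M i (ξ i) * M j (ξ j) ∂μ
        = (∫ x, (M i x)^2 ∂lineMeasure) + ((n:ℝ)-1)*m^2 := by
      intro i
      rw [← Finset.add_sum_erase Finset.univ _ (Finset.mem_univ i)]
      congr 1
      · rw [show (fun ξ : Fin n → ℝ => M i (ξ i) * M i (ξ i))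
            = fun ξ => (M i (ξ i))^2 from funext fun ξ => (sq _).symm]
        exact fact_sq i
      · rw [Finset.sum_congr rfl
          (fun j hj => fact_cross i j (Ne.symm (Finset.ne_of_mem_erase hj)))]
        rw [Finset.sum_const, Finset.card_erase_of_mem (Finset.mem_univ i),
          Finset.card_univ, Fintype.card_fin, nsmul_eq_mul,
          Nat.cast_sub (by omega : 1 ≤ n), Nat.cast_one]
        ring
    rw [Finset.sum_congr rfl fun i _ => integral_finset_sum _ (fun j _ => Iaa i j),
      Finset.sum_congr rfl fun i _ => hdiag i, Finset.sum_add_distrib, Finset.sum_const,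
      Finset.card_univ, Fintype.card_fin,
      Finset.sum_congr rfl fun i _ => facta i, Finset.sum_const,
      Finset.card_univ, Fintype.card_fin]
    simp only [measure_univ, probReal_univ, ENNReal.toReal_one, smul_eq_mul, nsmul_eq_mul, one_mul]
    rw [← hS]
    ring
  -- key identity
  have hGH : ∫ ξ, (g ξ - h ξ)^2 ∂μ
      = ∫ ξ, (g ξ)^2 ∂μ - (S - ((n:ℝ)-1)*m^2) := by
    have hpt : (fun ξ => (g ξ - h ξ)^2)
        = fun ξ => ((g ξ)^2 - 2*(g ξ * h ξ)) + (h ξ)^2 := by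
      funext ξ; ring
    have Imul : Integrable (fun ξ => g ξ * h ξ) μ := memLp_two_mul_integrable hg hh2
    have I3 : Integrable (fun ξ => (g ξ)^2 - 2*(g ξ * h ξ)) μ :=
      hg.integrable_sq.sub (Imul.const_mul 2)
    rw [hpt, integral_add I3 hh2.integrable_sq,
      integral_sub hg.integrable_sq (Imul.const_mul 2), integral_const_mul, Igh, Ihh, hc]
    ring
  have hsqInt : Integrable (fun ξ => (g ξ - h ξ)^2) μ := by
    have := (hg.sub hh2).integrable_sq
    simpa [Pi.sub_apply] using this
  have hiff : ∫ ξ, (g ξ - h ξ)^2 ∂μ = 0 ↔ g =ᵐ[μ] h := by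
    rw [integral_eq_zero_iff_of_nonneg (fun ξ => sq_nonneg _) hsqInt]
    constructor
    · intro hz
      filter_upwards [hz] with ξ hξ
      have h0 : (g ξ - h ξ)^2 = 0 := hξ
      have := (pow_eq_zero_iff two_ne_zero).mp h0
      linarith [sub_eq_zero.mp this]
    · intro hz
      filter_upwards [hz] with ξ hξ
      simp [hξ]
  constructor
  · intro heq
    exact hiff.1 (by rw [hGH, heq]; ring)
  · intro heq
    have h0 := hiff.2 heq
    rw [hGH] at h0
    linarith


theorem stmt2 (n : ℕ) (hn : 2 ≤ n) (g : (Fin n → ℝ) → ℝ)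
    (hg : MemLp g 2 (cubeMeasure n)) :
    (∫ ξ, (g ξ)^2 ∂(cubeMeasure n) =
      (∑ i : Fin n, ∫ x, (marginal g i x)^2 ∂lineMeasure)
        - ((n : ℝ) - 1) * (∫ ξ, g ξ ∂(cubeMeasure n))^2)
    ↔ g =ᵐ[cubeMeasure n]
        (fun ξ => (∑ i : Fin n, marginal g i (ξ i))
          - ((n : ℝ) - 1) * ∫ η, g η ∂(cubeMeasure n)) := by
  set g' := hg.1.mk g with hg'def
  have hg'm : StronglyMeasurable g' := hg.1.stronglyMeasurable_mk
  have hgg' : g =ᵐ[cubeMeasure n] g' := hg.1.ae_eq_mk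
  have hg' : MemLp g' 2 (cubeMeasure n) := hg.ae_eq hgg'
  have t2 : ∫ ξ, g ξ ∂cubeMeasure n = ∫ ξ, g' ξ ∂cubeMeasure n := integral_congr_ae hgg'
  have t1 : ∫ ξ, (g ξ)^2 ∂cubeMeasure n = ∫ ξ, (g' ξ)^2 ∂cubeMeasure n :=
    integral_congr_ae (hgg'.mono fun ξ hξ => by simp only; rw [hξ])
  have t3 : ∀ i : Fin n, marginal g i =ᵐ[lineMeasure] marginal g' i := by
    intro i
    have hT := measurePreserving_updateT n i
    have hmapped : g =ᵐ[Measure.map (fun p : ℝ × (Fin n → ℝ) => Function.update p.2 i p.1)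
        (lineMeasure.prod (cubeMeasure n))] g' := by
      rw [hT.map_eq]; exact hgg'
    have hcomp := ae_eq_comp (measurable_updateT i).aemeasurable hmapped
    have hcomp' : (fun p : ℝ × (Fin n → ℝ) => g (Function.update p.2 i p.1))
        =ᵐ[lineMeasure.prod (cubeMeasure n)]
        (fun p => g' (Function.update p.2 i p.1)) := hcomp
    have h2 := Measure.ae_ae_of_ae_prod hcomp'
    filter_upwards [h2] with x hx
    exact integral_congr_ae hx
  have t4 : ∀ i : Fin n,
      ∫ x, (marginal g i x)^2 ∂lineMeasure = ∫ x, (marginal g' i x)^2 ∂lineMeasure :=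
    fun i => integral_congr_ae ((t3 i).mono fun x hx => by simp only; rw [hx])
  have t5 : ∀ i : Fin n, (fun ξ : Fin n → ℝ => marginal g i (ξ i))
      =ᵐ[cubeMeasure n] (fun ξ => marginal g' i (ξ i)) := by
    intro i
    have hmapped : marginal g i =ᵐ[Measure.map (fun ξ : Fin n → ℝ => ξ i) (cubeMeasure n)]
        marginal g' i := by
      rw [(measurePreserving_evalC n i).map_eq]; exact t3 i
    exact ae_eq_comp (measurable_pi_apply i).aemeasurable hmapped
  have t5' : (fun ξ : Fin n → ℝ => ∑ i : Fin n, marginal g i (ξ i))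
      =ᵐ[cubeMeasure n] (fun ξ => ∑ i : Fin n, marginal g' i (ξ i)) := by
    have hall : ∀ᵐ ξ ∂cubeMeasure n, ∀ i : Fin n, marginal g i (ξ i) = marginal g' i (ξ i) :=
      ae_all_iff.2 fun i => t5 i
    filter_upwards [hall] with ξ hξ
    exact Finset.sum_congr rfl fun i _ => hξ i
  rw [t1, t2, Finset.sum_congr rfl fun i _ => t4 i,
    key n hn g' hg'm hg']
  have hBB' : (fun ξ : Fin n → ℝ => (∑ i : Fin n, marginal g i (ξ i))
        - ((n:ℝ) - 1) * ∫ η, g' η ∂cubeMeasure n)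
      =ᵐ[cubeMeasure n] (fun ξ => (∑ i : Fin n, marginal g' i (ξ i))
        - ((n:ℝ) - 1) * ∫ η, g' η ∂cubeMeasure n) := by
    filter_upwards [t5'] with ξ hξ
    rw [show (∑ i : Fin n, marginal g i (ξ i)) = ∑ i : Fin n, marginal g' i (ξ i) from hξ]
  constructor
  · intro hz
    exact hgg'.trans (hz.trans hBB'.symm)
  · intro hz
    exact hgg'.symm.trans (hz.trans hBB')
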